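/- Posterior covariance monotonicity under sequential updates: each sequential data update step strictly does not increase the covariance in the Loewner order, i.e., S₁ = (I − Kh)S₀(I − Kh)' + γKK' ⪯ S₀ where K = S₀h'/(γ + hS₀h'), with equality iff hS₀ = 0. -/

import Mathlib

/-!
With `u = S₀hᵀ = (hS₀)ᵀ` and `c = γ + hS₀hᵀ > 0`, the Joseph form of the update collapses to
`S₁ = S₀ - c⁻¹ uuᵀ`. The decrease `c⁻¹ uuᵀ` is a positive multiple of a Gram matrix, hence
positive semidefinite, and it vanishes exactly when `u = 0`.
-/

open Matrix

namespace Matrix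

variable {R : Type*} [Field R] {n : Type*} [Fintype n] [DecidableEq n]

theorem joseph_update_eq_sub {S : Matrix n n R} (hS : S.IsSymm)
    {h : Matrix (Fin 1) n R} {γ : R} (hc : γ + (h * S * hᵀ) 0 0 ≠ 0)
    {K : Matrix n (Fin 1) R} (hK : K = (γ + (h * S * hᵀ) 0 0)⁻¹ • (S * hᵀ)) :
    (1 - K * h) * S * (1 - K * h)ᵀ + γ • (K * Kᵀ) =
      S - (γ + (h * S * hᵀ) 0 0)⁻¹ • ((h * S)ᵀ * (h * S)) := by
  have hSh : S * hᵀ = (h * S)ᵀ := by rw [transpose_mul, hS.eq]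
  have hhSh : h * S * hᵀ = (h * S * hᵀ) 0 0 • (1 : Matrix (Fin 1) (Fin 1) R) := by
    ext i j; fin_cases i; fin_cases j; simp
  set q := (h * S * hᵀ) 0 0
  set B := h * S
  have hBtB : Bᵀ * h * S = Bᵀ * B := Matrix.mul_assoc _ _ _
  have hBtqB : Bᵀ * h * S * hᵀ * B = q • (Bᵀ * B) := by
    rw [hBtB, Matrix.mul_assoc Bᵀ B, hhSh, Matrix.mul_smul, Matrix.mul_one, Matrix.smul_mul]
  subst hK
  simp only [hSh, transpose_sub, transpose_one, transpose_smul, transpose_transpose,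
    transpose_mul, sub_mul, mul_sub, one_mul, mul_one, Matrix.smul_mul, Matrix.mul_smul,
    ← Matrix.mul_assoc]
  rw [hBtqB, hBtB]
  match_scalars
  · rfl
  · field_simp
    ring

end Matrix

/-- Posterior covariance monotonicity under sequential updates:
`S₁ = (I − Kh)S₀(I − Kh)ᵀ + γKKᵀ ⪯ S₀` in the Loewner order, where
`K = S₀hᵀ/(γ + hS₀hᵀ)`, with equality iff `hS₀ = 0`. -/
theorem stmt16 {n : ℕ} (S₀ : Matrix (Fin n) (Fin n) ℝ)
    (h : Matrix (Fin 1) (Fin n) ℝ) (γ : ℝ)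
    (hS₀ : S₀.PosDef) (hγ : 0 < γ)
    (K : Matrix (Fin n) (Fin 1) ℝ)
    (hK : K = (γ + (h * S₀ * hᵀ) 0 0)⁻¹ • (S₀ * hᵀ))
    (S₁ : Matrix (Fin n) (Fin n) ℝ)
    (hS₁ : S₁ = (1 - K * h) * S₀ * (1 - K * h)ᵀ + γ • (K * Kᵀ)) :
    (S₀ - S₁).PosSemidef ∧ (S₁ = S₀ ↔ h * S₀ = 0) := by
  have hquad : 0 ≤ (h * S₀ * hᵀ) 0 0 := by
    simpa [conjTranspose_eq_transpose_of_trivial] using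
      (hS₀.posSemidef.mul_mul_conjTranspose_same h).diag_nonneg (i := 0)
  set c := γ + (h * S₀ * hᵀ) 0 0
  have hc : 0 < c := add_pos_of_pos_of_nonneg hγ hquad
  have hdiff : S₀ - S₁ = c⁻¹ • ((h * S₀)ᵀ * (h * S₀)) := by
    rw [hS₁, joseph_update_eq_sub (isHermitian_iff_isSymm.mp hS₀.isHermitian) hc.ne' hK,
      sub_sub_cancel]
  have hgram := posSemidef_conjTranspose_mul_self (h * S₀)
  rw [conjTranspose_eq_transpose_of_trivial] at hgram
  refine ⟨hdiff ▸ hgram.smul (inv_nonneg.mpr hc.le), ?_⟩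
  rw [eq_comm, ← sub_eq_zero, hdiff, smul_eq_zero, inv_eq_zero, or_iff_right hc.ne',
    ← conjTranspose_eq_transpose_of_trivial, conjTranspose_mul_self_eq_zero]
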